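/- (Orthotropic W^{1,1} stability of the averaging interpolant, d = 2, with constant one in integral form.) Let N ∈ ℕ with N ≥ 2, h = 1/N, Ω = (0,1)². Let w : ℝ² → ℝ be continuously differentiable with w = 0 outside Ω. Let Π_h w(x) = Σ_{k ∈ {1,…,N−1}²} W_k(w) Λ_k(x), where Λ_k(x) = λ_{k₁}(x₁) λ_{k₂}(x₂) with λ_j(t) = max(0, 1 − |t/h − j|) and W_k(w) = ⨍_{hk + (−h/2, h/2)²} w dx. For k ∈ {0,…,N−1}² let Q_k = [hk₁, h(k₁+1)] × [hk₂, h(k₂+1)] and let 𝒩_k = ([h(k₁−1), h(k₁+2)] × [h(k₂−1), h(k₂+2)]) ∩ [0,1]² be its patch. Then for each i ∈ {1,2} and each k: ∫_{Q_k} |∂_i(Π_h w)(x)| dx ≤ ∫_{𝒩_k} |∂_i w(x)| dx, where ∂_i(Π_h w) denotes the (piecewise polynomial, almost-everywhere defined) partial derivative of Π_h w. -/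

import Mathlib

/-!
On a cell `Q_k` the interpolant is bilinear, so along the cell `∂_i (Π_h w)` equals `N` times a
convex combination (with the hat weights in the other variable) of the two differences of
consecutive nodal values in direction `i`. Each such difference is a difference of averages of
`w` over two cubes of side `h` that are translates of each other in direction `i` (a boundary
node, whose value is `0`, is represented by a cube outside `Ω`, where `w` vanishes). By the
fundamental theorem of calculus along direction `i` such a difference is at most
`N ∫_{𝒩_k} |∂_i w|`. Hence `|∂_i (Π_h w)| ≤ N² ∫_{𝒩_k} |∂_i w|` on `Q_k`, and the cell has
area `N⁻²`.
-/

open MeasureTheory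

/-- One-dimensional hat function with node `j h`: `λ_j(t) = max(0, 1 − |t/h − j|)`. -/
noncomputable def hatFn (h : ℝ) (j : ℕ) (t : ℝ) : ℝ := max 0 (1 - |t / h - (j : ℝ)|)

/-- Tensor-product hat function `Λ_k(x) = Π_i λ_{k_i}(x_i)`. -/
noncomputable def LamFn (d : ℕ) (h : ℝ) (k : Fin d → ℕ) (x : Fin d → ℝ) : ℝ :=
  ∏ i, hatFn h (k i) (x i)

/-- The open cube `h k + (−h/2, h/2)^d` centered at the node `h k`. -/
def nodeCube (d : ℕ) (h : ℝ) (k : Fin d → ℕ) : Set (Fin d → ℝ) :=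
  {x | ∀ i, |x i - h * (k i : ℝ)| < h / 2}

/-- Nodal value `W_k(w) = ⨍_{h k + (−h/2,h/2)^d} w dx`. -/
noncomputable def nodalW (d : ℕ) (h : ℝ) (k : Fin d → ℕ) (w : (Fin d → ℝ) → ℝ) : ℝ :=
  ⨍ x in nodeCube d h k, w x

/-- The averaging interpolant
`Π_h w (x) = Σ_{k ∈ {1,…,N−1}^d} W_k(w) Λ_k(x)` with `h = 1/N`. -/
noncomputable def interpQ (d N : ℕ) (w : (Fin d → ℝ) → ℝ) (x : Fin d → ℝ) : ℝ :=
  ∑ k ∈ Finset.Icc (fun _ => 1) (fun _ => N - 1),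
    nodalW d ((N : ℝ)⁻¹) k w * LamFn d ((N : ℝ)⁻¹) k x

/-- The open unit cube `Ω = (0,1)^d`. -/
def unitCube (d : ℕ) : Set (Fin d → ℝ) := {x | ∀ i, 0 < x i ∧ x i < 1}

/-- The `i`-th partial derivative (defined pointwise via `deriv` along the `i`-th
coordinate; it is the a.e.-defined partial derivative for piecewise polynomials). -/
noncomputable def pderivI (d : ℕ) (i : Fin d) (f : (Fin d → ℝ) → ℝ)
    (x : Fin d → ℝ) : ℝ :=
  deriv (fun t => f (Function.update x i t)) (x i)

/-- The closed mesh cell `Q_k = [h k₁, h(k₁+1)] × [h k₂, h(k₂+1)]`, `h = 1/N`. -/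
def meshCell (N : ℕ) (k : Fin 2 → ℕ) : Set (Fin 2 → ℝ) :=
  {x | ∀ j, (k j : ℝ) / N ≤ x j ∧ x j ≤ ((k j : ℝ) + 1) / N}

/-- The patch `𝒩_k = ([h(k₁−1), h(k₁+2)] × [h(k₂−1), h(k₂+2)]) ∩ [0,1]²`. -/
def meshPatch (N : ℕ) (k : Fin 2 → ℕ) : Set (Fin 2 → ℝ) :=
  {x | ∀ j, ((k j : ℝ) - 1) / N ≤ x j ∧ x j ≤ ((k j : ℝ) + 2) / N ∧
    0 ≤ x j ∧ x j ≤ 1}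

namespace AveragingInterpolant

open Set

section Coordinates

variable {α : Type*} (i : Fin 2)

def other : Fin 2 := i.succAbove 0

def pairAt (u v : α) : Fin 2 → α := Fin.insertNth i u fun _ => v

variable {i}

lemma other_ne : other i ≠ i := Fin.succAbove_ne i 0

@[simp] lemma pairAt_self (u v : α) : pairAt i u v i = u := Fin.insertNth_apply_same _ _ _

@[simp] lemma pairAt_other (u v : α) : pairAt i u v (other i) = v :=
  Fin.insertNth_apply_succAbove _ _ _ _

lemma pairAt_apply_self_other (x : Fin 2 → α) : pairAt i (x i) (x (other i)) = x := by
  conv_rhs => rw [← Fin.insertNth_self_removeNth i x]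
  unfold pairAt
  congr 1
  funext j
  rw [Subsingleton.elim j 0]
  rfl

lemma update_pairAt (u v t : α) : Function.update (pairAt i u v) i t = pairAt i t v :=
  Fin.update_insertNth _ _ _ _

lemma pairAt_inj {u v u' v' : α} : pairAt i u v = pairAt i u' v' ↔ u = u' ∧ v = v' := by
  refine ⟨fun h => ⟨?_, ?_⟩, fun h => h.1 ▸ h.2 ▸ rfl⟩
  · simpa using congrFun h i
  · simpa using congrFun h (other i)

lemma forall_fin_two_iff {P : Fin 2 → Prop} : (∀ j, P j) ↔ P i ∧ P (other i) := by
  rw [Fin.forall_iff_succAbove i, Fin.forall_fin_one]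
  rfl

lemma prod_pairAt {M : Type*} [CommMonoid M] (f : Fin 2 → α → M) (u v : α) :
    ∏ j, f j (pairAt i u v j) = f i u * f (other i) v := by
  rw [Fin.prod_univ_succAbove _ i, Fin.prod_univ_one, pairAt_self]
  exact congrArg _ (congrArg (f (other i)) (pairAt_other u v))

variable (i)

lemma sum_eq_sum_pairAt {β M : Type*} [DecidableEq β] [AddCommMonoid M]
    (F : Finset (Fin 2 → β)) (P Q : Finset β) (f : (Fin 2 → β) → M)
    (hf : ∀ k, f k ≠ 0 → k i ∈ P ∧ k (other i) ∈ Q) :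
    ∑ k ∈ F, f k = ∑ p ∈ P, ∑ q ∈ Q, if pairAt i p q ∈ F then f (pairAt i p q) else 0 := by
  rw [← Finset.sum_product' (f := fun p q => if pairAt i p q ∈ F then f (pairAt i p q) else 0),
    ← Finset.sum_image (f := fun k => if k ∈ F then f k else 0)
      (g := fun z : β × β => pairAt i z.1 z.2)
      (fun z _ z' _ hz => Prod.ext_iff.2 (pairAt_inj.1 hz)),
    Finset.sum_ite_mem]
  refine (Finset.sum_subset Finset.inter_subset_right fun k hkF hk => ?_).symm
  by_contra hne
  obtain ⟨hP, hQ⟩ := hf k hne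
  exact hk (Finset.mem_inter.2 ⟨Finset.mem_image.2
    ⟨(k i, k (other i)), Finset.mem_product.2 ⟨hP, hQ⟩, pairAt_apply_self_other k⟩, hkF⟩)

lemma continuous_pairAt : Continuous fun z : ℝ × ℝ => pairAt i z.1 z.2 :=
  continuous_pi ((forall_fin_two_iff (i := i)).2
    ⟨by simpa using continuous_fst, by simpa using continuous_snd⟩)

lemma hasDerivAt_pairAt (u v : ℝ) : HasDerivAt (fun t => pairAt i t v) (Pi.single i 1) u := by
  refine hasDerivAt_pi.2 ((forall_fin_two_iff (i := i)).2 ⟨?_, ?_⟩)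
  · simpa using hasDerivAt_id' u
  · simpa [Pi.single_eq_of_ne other_ne] using hasDerivAt_const u v

def pairAtEquiv : ℝ × ℝ ≃ᵐ (Fin 2 → ℝ) :=
  ((MeasurableEquiv.piFinSuccAbove (fun _ => ℝ) i).trans
    ((MeasurableEquiv.refl ℝ).prodCongr (MeasurableEquiv.funUnique (Fin 1) ℝ))).symm

lemma pairAtEquiv_apply (z : ℝ × ℝ) : pairAtEquiv i z = pairAt i z.1 z.2 := rfl

lemma measurePreserving_pairAtEquiv : MeasurePreserving (pairAtEquiv i) :=
  ((volume_preserving_piFinSuccAbove (fun _ => ℝ) i).trans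
    ((MeasurePreserving.id _).prod (volume_preserving_funUnique (Fin 1) ℝ))).symm _

lemma setIntegral_univ_pi_eq_prod (S : Fin 2 → Set ℝ) (f : (Fin 2 → ℝ) → ℝ) :
    ∫ x in univ.pi S, f x = ∫ z in S i ×ˢ S (other i), f (pairAt i z.1 z.2) := by
  have hpre : pairAtEquiv i ⁻¹' univ.pi S = S i ×ˢ S (other i) := by
    ext z
    simp [pairAtEquiv_apply, forall_fin_two_iff (i := i)]
  rw [← (measurePreserving_pairAtEquiv i).setIntegral_preimage_emb
    (pairAtEquiv i).measurableEmbedding, hpre]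
  rfl

lemma pderivI_pairAt (f : (Fin 2 → ℝ) → ℝ) (u v : ℝ) :
    pderivI 2 i f (pairAt i u v) = deriv (fun t => f (pairAt i t v)) u := by
  simp only [pderivI, update_pairAt, pairAt_self]

end Coordinates

section HatFunctions

variable {h : ℝ} {a : ℕ} {t : ℝ}

lemma le_div_and_div_le_of_mem_Icc (hh : 0 < h) (ht : t ∈ Icc (a * h) ((a + 1) * h)) :
    (a : ℝ) ≤ t / h ∧ t / h ≤ a + 1 :=
  ⟨(le_div_iff₀ hh).2 ht.1, (div_le_iff₀ hh).2 ht.2⟩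

lemma hatFn_eq_zero_of_mem_Icc (hh : 0 < h) (ht : t ∈ Icc (a * h) ((a + 1) * h)) {j : ℕ}
    (hja : j ≠ a) (hja' : j ≠ a + 1) : hatFn h j t = 0 := by
  obtain ⟨h₁, h₂⟩ := le_div_and_div_le_of_mem_Icc hh ht
  have : 1 ≤ |t / h - j| := by
    rcases (by omega : j + 1 ≤ a ∨ a + 2 ≤ j) with hj | hj
    · have : (j : ℝ) + 1 ≤ a := by exact_mod_cast hj
      exact le_abs.2 (Or.inl (by linarith))
    · have : (a : ℝ) + 2 ≤ j := by exact_mod_cast hj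
      exact le_abs.2 (Or.inr (by linarith))
  exact max_eq_left (by linarith)

lemma hatFn_of_mem_Icc (hh : 0 < h) (ht : t ∈ Icc (a * h) ((a + 1) * h)) :
    hatFn h a t = a + 1 - t / h := by
  obtain ⟨h₁, h₂⟩ := le_div_and_div_le_of_mem_Icc hh ht
  rw [hatFn, abs_of_nonneg (by linarith), max_eq_right (by linarith)]
  ring

lemma hatFn_succ_of_mem_Icc (hh : 0 < h) (ht : t ∈ Icc (a * h) ((a + 1) * h)) :
    hatFn h (a + 1) t = t / h - a := by
  obtain ⟨h₁, h₂⟩ := le_div_and_div_le_of_mem_Icc hh ht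
  rw [hatFn, Nat.cast_succ, abs_of_nonpos (by linarith), max_eq_right (by linarith)]
  ring

lemma hatFn_add_hatFn_succ (hh : 0 < h) (ht : t ∈ Icc (a * h) ((a + 1) * h)) :
    hatFn h a t + hatFn h (a + 1) t = 1 := by
  rw [hatFn_of_mem_Icc hh ht, hatFn_succ_of_mem_Icc hh ht]
  ring

lemma hatFn_nonneg (j : ℕ) (t : ℝ) : 0 ≤ hatFn h j t := le_max_left _ _

end HatFunctions

noncomputable def nodalValue (N : ℕ) (w : (Fin 2 → ℝ) → ℝ) (k : Fin 2 → ℕ) : ℝ :=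
  if k ∈ Finset.Icc (fun _ => 1) (fun _ => N - 1) then nodalW 2 (N : ℝ)⁻¹ k w else 0

lemma pairAt_mem_Icc_iff (i : Fin 2) {N p q : ℕ} :
    pairAt i p q ∈ Finset.Icc (fun _ => 1) (fun _ => N - 1) ↔
      (1 ≤ p ∧ p ≤ N - 1) ∧ 1 ≤ q ∧ q ≤ N - 1 := by
  simp only [Finset.mem_Icc, Pi.le_def, forall_fin_two_iff (i := i), pairAt_self, pairAt_other]
  tauto

section InterpolantOnCell

variable {N : ℕ} (w : (Fin 2 → ℝ) → ℝ) (i : Fin 2) {a b : ℕ}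

lemma interpQ_pairAt_eq (hN : 0 < N) {u v : ℝ} (hu : u ∈ Icc ((a : ℝ) / N) ((a + 1) / N))
    (hv : v ∈ Icc ((b : ℝ) / N) ((b + 1) / N)) :
    interpQ 2 N w (pairAt i u v) = ∑ p ∈ {a, a + 1}, ∑ q ∈ {b, b + 1},
      nodalValue N w (pairAt i p q) * (hatFn (N : ℝ)⁻¹ p u * hatFn (N : ℝ)⁻¹ q v) := by
  have hh : (0 : ℝ) < (N : ℝ)⁻¹ := by positivity
  simp only [div_eq_mul_inv] at hu hv
  have hLam (k : Fin 2 → ℕ) : LamFn 2 (N : ℝ)⁻¹ k (pairAt i u v) =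
      hatFn (N : ℝ)⁻¹ (k i) u * hatFn (N : ℝ)⁻¹ (k (other i)) v :=
    prod_pairAt (fun j t => hatFn _ (k j) t) u v
  simp only [interpQ, hLam]
  rw [sum_eq_sum_pairAt i _ {a, a + 1} {b, b + 1}]
  · simp only [nodalValue, pairAt_self, pairAt_other, ite_mul, zero_mul]
  · intro k hk
    simp only [Finset.mem_insert, Finset.mem_singleton]
    by_contra! hout
    apply hk
    by_cases hi : k i = a ∨ k i = a + 1
    · rw [hatFn_eq_zero_of_mem_Icc hh hv (hout hi).1 (hout hi).2, mul_zero, mul_zero]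
    · push Not at hi
      rw [hatFn_eq_zero_of_mem_Icc hh hu hi.1 hi.2, zero_mul, mul_zero]

lemma pderivI_interpQ_pairAt (hN : 0 < N) {u v : ℝ} (hu : u ∈ Ioo ((a : ℝ) / N) ((a + 1) / N))
    (hv : v ∈ Icc ((b : ℝ) / N) ((b + 1) / N)) :
    pderivI 2 i (interpQ 2 N w) (pairAt i u v) = N * ∑ q ∈ {b, b + 1},
      (nodalValue N w (pairAt i (a + 1) q) - nodalValue N w (pairAt i a q)) *
        hatFn (N : ℝ)⁻¹ q v := by
  have hh : (0 : ℝ) < (N : ℝ)⁻¹ := by positivity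
  set W := fun p q => nodalValue N w (pairAt i p q)
  set slope := (N : ℝ) * ∑ q ∈ {b, b + 1}, (W (a + 1) q - W a q) * hatFn (N : ℝ)⁻¹ q v
  set value₀ := ∑ q ∈ {b, b + 1}, (W a q * (a + 1) - W (a + 1) q * a) * hatFn (N : ℝ)⁻¹ q v
  have haffine : ∀ t ∈ Icc ((a : ℝ) / N) ((a + 1) / N),
      interpQ 2 N w (pairAt i t v) = value₀ + t * slope := by
    intro t ht
    rw [interpQ_pairAt_eq w i hN ht hv, Finset.sum_pair (by omega : a ≠ a + 1)]
    simp only [div_eq_mul_inv] at ht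
    rw [hatFn_of_mem_Icc hh ht, hatFn_succ_of_mem_Icc hh ht]
    simp only [value₀, slope, W, Finset.sum_pair (by omega : b ≠ b + 1), div_inv_eq_mul]
    ring
  have hlocal : (fun t => interpQ 2 N w (pairAt i t v)) =ᶠ[nhds u] fun t => value₀ + t * slope :=
    Filter.eventuallyEq_of_mem (Ioo_mem_nhds hu.1 hu.2)
      fun t ht => haffine t (Ioo_subset_Icc_self ht)
  rw [pderivI_pairAt, hlocal.deriv_eq]
  exact ((hasDerivAt_mul_const slope).const_add value₀).deriv

lemma abs_pderivI_interpQ_pairAt_le (hN : 0 < N) {M : ℝ}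
    (hM : ∀ q ∈ ({b, b + 1} : Finset ℕ),
      |nodalValue N w (pairAt i (a + 1) q) - nodalValue N w (pairAt i a q)| ≤ M)
    {u v : ℝ} (hu : u ∈ Ioo ((a : ℝ) / N) ((a + 1) / N))
    (hv : v ∈ Icc ((b : ℝ) / N) ((b + 1) / N)) :
    |pderivI 2 i (interpQ 2 N w) (pairAt i u v)| ≤ N * M := by
  have hh : (0 : ℝ) < (N : ℝ)⁻¹ := by positivity
  simp only [div_eq_mul_inv] at hv
  rw [pderivI_interpQ_pairAt w i hN hu hv, abs_mul, Nat.abs_cast]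
  gcongr
  calc _ ≤ ∑ q ∈ {b, b + 1},
          |nodalValue N w (pairAt i (a + 1) q) - nodalValue N w (pairAt i a q)| *
            hatFn (N : ℝ)⁻¹ q v := by
        refine (Finset.abs_sum_le_sum_abs _ _).trans_eq ?_
        simp only [abs_mul, abs_of_nonneg (hatFn_nonneg _ _)]
    _ ≤ ∑ q ∈ {b, b + 1}, M * hatFn (N : ℝ)⁻¹ q v :=
        Finset.sum_le_sum fun q hq => mul_le_mul_of_nonneg_right (hM q hq) (hatFn_nonneg _ _)
    _ = M := by
        rw [← Finset.mul_sum, Finset.sum_pair (by omega : b ≠ b + 1),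
          hatFn_add_hatFn_succ hh hv, mul_one]

end InterpolantOnCell

lemma abs_sub_le_setIntegral_abs_deriv {f f' : ℝ → ℝ} (hf : ∀ t, HasDerivAt f (f' t) t)
    (hf' : Continuous f') {s s' u u' : ℝ} (hsu : s ≤ u) (huu' : u ≤ u') (hu's' : u' ≤ s') :
    |f u' - f u| ≤ ∫ t in Icc s s', |f' t| := by
  rw [← intervalIntegral.integral_eq_sub_of_hasDerivAt (fun t _ => hf t)
    (hf'.intervalIntegrable u u')]
  calc |∫ t in u..u', f' t| ≤ ∫ t in u..u', |f' t| :=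
        intervalIntegral.abs_integral_le_integral_abs huu'
    _ = ∫ t in Ioc u u', |f' t| := intervalIntegral.integral_of_le huu'
    _ ≤ ∫ t in Icc s s', |f' t| :=
        setIntegral_mono_set hf'.abs.integrableOn_Icc (ae_of_all _ fun _ => abs_nonneg _)
          (Ioc_subset_Icc_self.trans (Icc_subset_Icc hsu hu's')).eventuallyLE

lemma abs_setIntegral_translate_sub_le {g g' : ℝ × ℝ → ℝ} (hg : Continuous g)
    (hg' : Continuous g') (hderiv : ∀ u v, HasDerivAt (fun t => g (t, v)) (g' (u, v)) u)
    {s s' δ : ℝ} (hs : s ≤ s') (hδ : 0 ≤ δ) {T : Set ℝ} (hT : IsCompact T) :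
    |(∫ z in Icc (s + δ) (s' + δ) ×ˢ T, g z) - ∫ z in Icc s s' ×ˢ T, g z| ≤
      (s' - s) * ∫ z in Icc s (s' + δ) ×ˢ T, |g' z| := by
  set G : ℝ → ℝ := fun u => ∫ v in T, g (u, v)
  have hG : Continuous G :=
    continuous_parametric_integral_of_continuous (f := fun u v => g (u, v)) hg hT
  have hslab (c c' : ℝ) (hc : c ≤ c') : ∫ z in Icc c c' ×ˢ T, g z = ∫ u in c..c', G u := by
    rw [Measure.volume_eq_prod, setIntegral_prod _
      (hg.continuousOn.integrableOn_compact (isCompact_Icc.prod hT)),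
      integral_Icc_eq_integral_Ioc, intervalIntegral.integral_of_le hc]
  have hswap : ∫ z in Icc s (s' + δ) ×ˢ T, |g' z| =
      ∫ v in T, ∫ t in Icc s (s' + δ), |g' (t, v)| := by
    rw [Measure.volume_eq_prod, ← setIntegral_prod_swap, setIntegral_prod (fun z => |g' z.swap|)
      ((hg'.comp continuous_swap).abs.continuousOn.integrableOn_compact (hT.prod isCompact_Icc))]
    rfl
  have hslice (c : ℝ) : IntegrableOn (fun v => g (c, v)) T :=
    (hg.comp (Continuous.prodMk_right c)).continuousOn.integrableOn_compact hT
  have hpoint : ∀ u ∈ Icc s s', |G (u + δ) - G u| ≤ ∫ z in Icc s (s' + δ) ×ˢ T, |g' z| := by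
    intro u hu
    rw [hswap, ← integral_sub (hslice _) (hslice _)]
    refine abs_integral_le_integral_abs.trans (setIntegral_mono_on ((hslice _).sub (hslice _)).abs
      ((continuous_parametric_integral_of_continuous (f := fun v t => |g' (t, v)|)
        (hg'.abs.comp continuous_swap) isCompact_Icc).continuousOn.integrableOn_compact hT)
      hT.measurableSet fun v _ => ?_)
    exact abs_sub_le_setIntegral_abs_deriv (fun t => hderiv t v)
      (hg'.comp (Continuous.prodMk_left v)) hu.1 (by linarith) (by linarith [hu.2])
  rw [hslab (s + δ) (s' + δ) (by linarith), hslab s s' hs,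
    ← intervalIntegral.integral_comp_add_right, ← intervalIntegral.integral_sub
      (f := fun u => G (u + δ)) ((hG.comp (continuous_add_const δ)).intervalIntegrable _ _)
      (hG.intervalIntegrable _ _)]
  calc ‖∫ u in s..s', G (u + δ) - G u‖ ≤ (∫ z in Icc s (s' + δ) ×ˢ T, |g' z|) * |s' - s| :=
        intervalIntegral.norm_integral_le_of_norm_le_const fun u hu =>
          (Real.norm_eq_abs _).trans_le (hpoint u (Ioc_subset_Icc_self ((uIoc_of_le hs) ▸ hu)))
    _ = _ := by rw [abs_of_nonneg (sub_nonneg.2 hs), mul_comm]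

section VanishingOutside

variable {w : (Fin 2 → ℝ) → ℝ} (i : Fin 2)

lemma pderivI_eq_fderiv (hw : Differentiable ℝ w) (x : Fin 2 → ℝ) :
    pderivI 2 i w x = fderiv ℝ w x (Pi.single i 1) := by
  rw [← pairAt_apply_self_other (i := i) x, pderivI_pairAt]
  exact ((hw _).hasFDerivAt.comp_hasDerivAt _ (hasDerivAt_pairAt i _ _)).deriv

lemma hasDerivAt_apply_pairAt (hw : Differentiable ℝ w) (u v : ℝ) :
    HasDerivAt (fun t => w (pairAt i t v)) (pderivI 2 i w (pairAt i u v)) u := by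
  rw [pderivI_eq_fderiv i hw]
  exact (hw _).hasFDerivAt.comp_hasDerivAt _ (hasDerivAt_pairAt i _ _)

lemma continuous_pderivI (hw : ContDiff ℝ 1 w) : Continuous (pderivI 2 i w) := by
  rw [funext (pderivI_eq_fderiv i (hw.differentiable one_ne_zero))]
  exact (hw.continuous_fderiv one_ne_zero).clm_apply continuous_const

variable (hw0 : ∀ x, x ∉ unitCube 2 → w x = 0)
include hw0

lemma apply_pairAt_eq_zero {t : ℝ} (ht : t ∉ Ioo 0 1) (v : ℝ) : w (pairAt i t v) = 0 :=
  hw0 _ fun h => ht (by simpa using h i)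

lemma pderivI_eq_zero {x : Fin 2 → ℝ} (hx : x i ∉ Icc 0 1) : pderivI 2 i w x = 0 := by
  rw [← pairAt_apply_self_other (i := i) x, pderivI_pairAt]
  have hzero : (fun t => w (pairAt i t (x (other i)))) =ᶠ[nhds (x i)] fun _ => 0 :=
    Filter.eventuallyEq_of_mem (isClosed_Icc.isOpen_compl.mem_nhds hx) fun t ht =>
      apply_pairAt_eq_zero i hw0 (fun h => ht (Ioo_subset_Icc_self h)) _
  rw [hzero.deriv_eq, deriv_const]

lemma setIntegral_abs_pderivI_le (hw : ContDiff ℝ 1 w) {A T : Set ℝ} (hA : MeasurableSet A)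
    (hT : MeasurableSet T) {S : Fin 2 → Set ℝ} (hS : ∀ j, IsCompact (S j))
    (hAS : A ∩ Icc 0 1 ⊆ S i) (hTS : T ⊆ S (other i)) :
    ∫ z in A ×ˢ T, |pderivI 2 i w (pairAt i z.1 z.2)| ≤ ∫ x in univ.pi S, |pderivI 2 i w x| := by
  rw [setIntegral_univ_pi_eq_prod i, setIntegral_eq_of_subset_of_forall_sdiff_eq_zero
    (hA.prod hT) (prod_mono inter_subset_left subset_rfl)]
  · exact setIntegral_mono_set
      (((continuous_pderivI i hw).comp (continuous_pairAt i)).abs.continuousOn.integrableOn_compact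
        ((hS i).prod (hS _)))
      (ae_of_all _ fun _ => abs_nonneg _) (prod_mono hAS hTS).eventuallyLE
  · rintro z ⟨⟨hzA, hzT⟩, hz⟩
    have hz₁ : pairAt i z.1 z.2 i ∉ Icc 0 1 := by
      rw [pairAt_self]
      exact fun h => hz ⟨⟨hzA, h⟩, hzT⟩
    rw [pderivI_eq_zero i hw0 hz₁, abs_zero]

end VanishingOutside

lemma nodeCube_eq_univ_pi (d : ℕ) (h : ℝ) (k : Fin d → ℕ) :
    nodeCube d h k = univ.pi fun j => Ioo (h * k j - h / 2) (h * k j + h / 2) := by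
  ext x
  simp only [nodeCube, mem_ofPred_eq, mem_univ_pi, mem_Ioo, abs_lt]
  exact forall_congr' fun j => by constructor <;> rintro ⟨h₁, h₂⟩ <;> constructor <;> linarith

lemma nodalW_eq_setIntegral {d : ℕ} {h : ℝ} (hh : 0 < h) (k : Fin d → ℕ)
    (f : (Fin d → ℝ) → ℝ) :
    nodalW d h k f = (h ^ d)⁻¹ * ∫ x in univ.pi fun j => Icc (h * k j - h / 2) (h * k j + h / 2),
      f x := by
  have hae : (univ.pi fun j => Ioo (h * k j - h / 2) (h * k j + h / 2)) =ᵐ[volume]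
      Icc (fun j => h * k j - h / 2) (fun j => h * k j + h / 2) :=
    Measure.univ_pi_Ioo_ae_eq_Icc
  rw [nodalW, setAverage_eq, nodeCube_eq_univ_pi, measureReal_def, Real.volume_pi_Ioo,
    setIntegral_congr_set hae, pi_univ_Icc, smul_eq_mul]
  simp only [add_sub_sub_cancel, add_halves, Finset.prod_const, Finset.card_univ,
    Fintype.card_fin, ENNReal.toReal_pow, ENNReal.toReal_ofReal hh.le]

/-- Centre, in direction `i`, of a cube of side `1/N` over which `w` averages to the nodal value
at `p`: the boundary nodes `0` and `N`, whose value is `0`, are moved outside `[0, 1]`, where `w`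
vanishes. -/
noncomputable def nodeCenter (N p : ℕ) : ℝ :=
  if p = 0 then -(N : ℝ)⁻¹ else if p = N then 1 + (N : ℝ)⁻¹ else (N : ℝ)⁻¹ * p

section NodeCenter

variable {N p : ℕ}

lemma nodeCenter_le_of_lt (hp : p < N) : nodeCenter N p ≤ (N : ℝ)⁻¹ * p := by
  unfold nodeCenter
  split_ifs with h₀
  · simp [h₀]
  · omega
  · rfl

lemma le_nodeCenter_of_pos (hp : 0 < p) : (N : ℝ)⁻¹ * p ≤ nodeCenter N p := by
  unfold nodeCenter
  split_ifs with h₀ hN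
  · omega
  · rw [hN, inv_mul_cancel₀ (Nat.cast_ne_zero.2 (by omega))]
    linarith [inv_nonneg.2 (Nat.cast_nonneg (α := ℝ) N)]
  · rfl

lemma nodeCenter_le_succ (ha : p + 1 ≤ N) : nodeCenter N p ≤ nodeCenter N (p + 1) :=
  calc nodeCenter N p ≤ (N : ℝ)⁻¹ * p := nodeCenter_le_of_lt (by omega)
    _ ≤ (N : ℝ)⁻¹ * (p + 1 : ℕ) := by gcongr; omega
    _ ≤ nodeCenter N (p + 1) := le_nodeCenter_of_pos (by omega)

lemma Icc_nodeCenter_inter_subset (hN : 0 < N) (hp : p + 1 ≤ N) :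
    Icc (nodeCenter N p - (N : ℝ)⁻¹ / 2) (nodeCenter N (p + 1) + (N : ℝ)⁻¹ / 2) ∩ Icc 0 1 ⊆
      Icc (((p : ℝ) - 1) / N) ((p + 2) / N) ∩ Icc 0 1 := by
  have hh : (0 : ℝ) < (N : ℝ)⁻¹ := by positivity
  have hNh : (N : ℝ)⁻¹ * N = 1 := inv_mul_cancel₀ (by positivity)
  rintro t ⟨⟨h₁, h₂⟩, h₀, h₃⟩
  refine ⟨⟨?_, ?_⟩, h₀, h₃⟩ <;> rw [div_eq_inv_mul]
  · rcases Nat.eq_zero_or_pos p with rfl | hp₀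
    · simp only [Nat.cast_zero, zero_sub, mul_neg, mul_one]
      linarith
    · have := le_nodeCenter_of_pos (N := N) hp₀
      nlinarith
  · by_cases hpN : p + 1 = N
    · have : (p : ℝ) + 1 = N := by exact_mod_cast hpN
      nlinarith
    · have := nodeCenter_le_of_lt (by omega : p + 1 < N)
      push_cast at this
      nlinarith

end NodeCenter

lemma Icc_node_subset {N b q : ℕ} (hN : 0 < N) (hq : q = b ∨ q = b + 1) (hq₁ : 1 ≤ q)
    (hqN : q + 1 ≤ N) :
    Icc ((N : ℝ)⁻¹ * q - (N : ℝ)⁻¹ / 2) ((N : ℝ)⁻¹ * q + (N : ℝ)⁻¹ / 2) ⊆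
      Icc (((b : ℝ) - 1) / N) ((b + 2) / N) ∩ Icc 0 1 := by
  have hh : (0 : ℝ) < (N : ℝ)⁻¹ := by positivity
  have hNh : (N : ℝ)⁻¹ * N = 1 := inv_mul_cancel₀ (by positivity)
  have hq₁' : (1 : ℝ) ≤ q := by exact_mod_cast hq₁
  have hqN' : (q : ℝ) + 1 ≤ N := by exact_mod_cast hqN
  have hbq : (b : ℝ) ≤ q ∧ (q : ℝ) ≤ b + 1 := by
    rcases hq with rfl | rfl <;> push_cast <;> constructor <;> linarith
  rintro t ⟨h₁, h₂⟩
  refine ⟨⟨?_, ?_⟩, ?_, ?_⟩ <;> (try rw [div_eq_inv_mul]) <;> nlinarith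

lemma meshPatch_eq_univ_pi (N : ℕ) (k : Fin 2 → ℕ) :
    meshPatch N k = univ.pi fun j => Icc (((k j : ℝ) - 1) / N) ((k j + 2) / N) ∩ Icc 0 1 := by
  ext x
  simp only [meshPatch, mem_ofPred_eq, mem_univ_pi, mem_inter_iff, mem_Icc, and_assoc]

section NodalDifferences

variable {N : ℕ} {w : (Fin 2 → ℝ) → ℝ} (i : Fin 2)

lemma nodalValue_pairAt_eq (hN : 0 < N) (hw0 : ∀ x, x ∉ unitCube 2 → w x = 0) {p q : ℕ}
    (hp : p ≤ N) (hq : 1 ≤ q ∧ q ≤ N - 1) :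
    nodalValue N w (pairAt i p q) = N ^ 2 *
      ∫ z in Icc (nodeCenter N p - (N : ℝ)⁻¹ / 2) (nodeCenter N p + (N : ℝ)⁻¹ / 2) ×ˢ
        Icc ((N : ℝ)⁻¹ * q - (N : ℝ)⁻¹ / 2) ((N : ℝ)⁻¹ * q + (N : ℝ)⁻¹ / 2),
        w (pairAt i z.1 z.2) := by
  have hh : (0 : ℝ) < (N : ℝ)⁻¹ := by positivity
  by_cases hp' : 1 ≤ p ∧ p ≤ N - 1
  · rw [nodalValue, if_pos ((pairAt_mem_Icc_iff i).2 ⟨hp', hq⟩), nodalW_eq_setIntegral hh,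
      setIntegral_univ_pi_eq_prod i, nodeCenter, if_neg (by omega), if_neg (by omega)]
    simp only [pairAt_self, pairAt_other, inv_pow, inv_inv]
  rw [nodalValue, if_neg (fun h => hp' ((pairAt_mem_Icc_iff i).1 h).1),
    setIntegral_eq_zero_of_forall_eq_zero, mul_zero]
  refine fun z hz => apply_pairAt_eq_zero i hw0 (fun hz₁ => ?_) _
  have hz₁' := (mem_prod.1 hz).1
  rcases (by omega : p = 0 ∨ p = N) with rfl | rfl
  · simp only [nodeCenter, if_true, mem_Icc] at hz₁'
    linarith [hz₁.1, hz₁'.2]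
  · simp only [nodeCenter, if_neg hN.ne', if_true, mem_Icc] at hz₁'
    linarith [hz₁.2, hz₁'.1]

lemma setIntegral_abs_pderivI_le_meshPatch (hN : 0 < N) (hw : ContDiff ℝ 1 w)
    (hw0 : ∀ x, x ∉ unitCube 2 → w x = 0) {k : Fin 2 → ℕ} (hki : k i + 1 ≤ N) {q : ℕ}
    (hq : q = k (other i) ∨ q = k (other i) + 1) (hq' : 1 ≤ q ∧ q ≤ N - 1) :
    ∫ z in Icc (nodeCenter N (k i) - (N : ℝ)⁻¹ / 2) (nodeCenter N (k i + 1) + (N : ℝ)⁻¹ / 2) ×ˢ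
        Icc ((N : ℝ)⁻¹ * q - (N : ℝ)⁻¹ / 2) ((N : ℝ)⁻¹ * q + (N : ℝ)⁻¹ / 2),
        |pderivI 2 i w (pairAt i z.1 z.2)| ≤
      ∫ x in meshPatch N k, |pderivI 2 i w x| := by
  rw [meshPatch_eq_univ_pi]
  exact setIntegral_abs_pderivI_le i hw0 hw measurableSet_Icc measurableSet_Icc
    (fun j => isCompact_Icc.inter_right isClosed_Icc) (Icc_nodeCenter_inter_subset hN hki)
    (Icc_node_subset hN hq hq'.1 (by omega))

lemma abs_nodalValue_succ_sub_le (hN : 0 < N) (hw : ContDiff ℝ 1 w)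
    (hw0 : ∀ x, x ∉ unitCube 2 → w x = 0) {k : Fin 2 → ℕ} (hk : ∀ j, k j ≤ N - 1) {q : ℕ}
    (hq : q ∈ ({k (other i), k (other i) + 1} : Finset ℕ)) :
    |nodalValue N w (pairAt i (k i + 1) q) - nodalValue N w (pairAt i (k i) q)| ≤
      N * ∫ x in meshPatch N k, |pderivI 2 i w x| := by
  by_cases hq' : 1 ≤ q ∧ q ≤ N - 1
  swap
  · simp only [nodalValue, pairAt_mem_Icc_iff, hq', and_false, if_false, sub_zero, abs_zero]
    exact mul_nonneg (Nat.cast_nonneg N) (integral_nonneg fun _ => abs_nonneg _)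
  have hki : k i + 1 ≤ N := by have := hk i; omega
  set h := (N : ℝ)⁻¹ with hh_def
  have hh : 0 < h := by positivity
  set c₀ := nodeCenter N (k i)
  set c₁ := nodeCenter N (k i + 1)
  have hshift := abs_setIntegral_translate_sub_le (g := fun z => w (pairAt i z.1 z.2))
    (g' := fun z => pderivI 2 i w (pairAt i z.1 z.2))
    (hw.continuous.comp (continuous_pairAt i))
    ((continuous_pderivI i hw).comp (continuous_pairAt i))
    (hasDerivAt_apply_pairAt i (hw.differentiable one_ne_zero))
    (s := c₀ - h / 2) (s' := c₀ + h / 2) (δ := c₁ - c₀) (by linarith)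
    (sub_nonneg.2 (nodeCenter_le_succ hki)) (isCompact_Icc (a := h * q - h / 2) (b := h * q + h / 2))
  rw [show c₀ - h / 2 + (c₁ - c₀) = c₁ - h / 2 by ring,
    show c₀ + h / 2 + (c₁ - c₀) = c₁ + h / 2 by ring,
    show c₀ + h / 2 - (c₀ - h / 2) = h by ring] at hshift
  have hpatch := setIntegral_abs_pderivI_le_meshPatch i hN hw hw0 hki
    (by simpa [eq_comm] using hq) hq'
  rw [nodalValue_pairAt_eq i hN hw0 hki hq', nodalValue_pairAt_eq i hN hw0 (by omega) hq',
    ← mul_sub, abs_mul, abs_of_pos (by positivity)]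
  calc (N : ℝ) ^ 2 * |_| ≤ N ^ 2 * (h * ∫ x in meshPatch N k, |pderivI 2 i w x|) := by
        gcongr
        exact hshift.trans (by gcongr)
    _ = N * ∫ x in meshPatch N k, |pderivI 2 i w x| := by
        rw [hh_def]
        field_simp

end NodalDifferences

lemma setIntegral_abs_meshCell_le {N : ℕ} (k : Fin 2 → ℕ) {f : (Fin 2 → ℝ) → ℝ} {C : ℝ}
    (hC : ∀ x ∈ univ.pi fun j => Ioo ((k j : ℝ) / N) ((k j + 1) / N), |f x| ≤ C) :
    ∫ x in meshCell N k, |f x| ≤ C * ((N : ℝ)⁻¹) ^ 2 := by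
  have hcell : meshCell N k = Icc (fun j => (k j : ℝ) / N) (fun j => ((k j : ℝ) + 1) / N) := by
    ext x
    simp only [meshCell, mem_ofPred_eq, mem_Icc, Pi.le_def, forall_and]
  have hae : (univ.pi fun j => Ioo ((k j : ℝ) / N) ((k j + 1) / N)) =ᵐ[volume]
      Icc (fun j => (k j : ℝ) / N) (fun j => ((k j : ℝ) + 1) / N) :=
    Measure.univ_pi_Ioo_ae_eq_Icc
  have hvol : volume (univ.pi fun j => Ioo ((k j : ℝ) / N) ((k j + 1) / N)) =
      ENNReal.ofReal (N : ℝ)⁻¹ ^ 2 := by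
    simp [Real.volume_pi_Ioo, add_div]
  rw [hcell, ← setIntegral_congr_set hae]
  refine (le_abs_self _).trans ((norm_setIntegral_le_of_norm_le_const
    (by rw [hvol]; exact ENNReal.pow_lt_top ENNReal.ofReal_lt_top)
    fun x hx => (Real.norm_eq_abs _).trans_le (by simpa using hC x hx)).trans_eq ?_)
  rw [measureReal_def, hvol, ENNReal.toReal_pow, ENNReal.toReal_ofReal (by positivity)]

end AveragingInterpolant

open AveragingInterpolant

/-- orthotropic `W^{1,1}` stability with constant one, `d = 2`:
for `w ∈ C¹` vanishing outside `Ω = (0,1)²`,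
`∫_{Q_k} |∂_i (Π_h w)| ≤ ∫_{𝒩_k} |∂_i w|` for each cell `Q_k` and `i ∈ {1,2}`. -/
theorem statement14 (N : ℕ) (hN : 2 ≤ N)
    (w : (Fin 2 → ℝ) → ℝ) (hw : ContDiff ℝ 1 w)
    (hw0 : ∀ x, x ∉ unitCube 2 → w x = 0) :
    ∀ (i : Fin 2) (k : Fin 2 → ℕ), (∀ j, k j ≤ N - 1) →
      (∫ x in meshCell N k, |pderivI 2 i (interpQ 2 N w) x|) ≤
        ∫ x in meshPatch N k, |pderivI 2 i w x| := by
  intro i k hk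
  have hN₀ : 0 < N := by omega
  set R := ∫ x in meshPatch N k, |pderivI 2 i w x|
  have hpoint : ∀ x ∈ Set.univ.pi fun j => Set.Ioo ((k j : ℝ) / N) ((k j + 1) / N),
      |pderivI 2 i (interpQ 2 N w) x| ≤ N * (N * R) := by
    intro x hx
    rw [← pairAt_apply_self_other (i := i) x]
    exact abs_pderivI_interpQ_pairAt_le w i hN₀
      (fun q hq => abs_nodalValue_succ_sub_le i hN₀ hw hw0 hk hq) (hx i (Set.mem_univ _))
      (Set.Ioo_subset_Icc_self (hx (other i) (Set.mem_univ _)))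
  calc _ ≤ N * (N * R) * ((N : ℝ)⁻¹) ^ 2 := setIntegral_abs_meshCell_le k hpoint
    _ = R := by field_simp
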